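/- Conjugating the rational Dunkl operator D_1 = ∂_1 − ∑_{j≠1}(k/(X_1−X_j))(1 − s_{1j}) by |Δ|^{2k}·sign(Δ), where Δ = ∏_{i<j}(X_i − X_j) — i.e., applying the automorphism sending ∂_i ↦ ∂_i + ∑_{j≠i} 2k/(X_i − X_j) and s_{ij} ↦ −s_{ij} — yields the operator ∂_1 + ∑_{j≠1}(k/(X_1−X_j))(1 − s_{1j}), which preserves ℂ[X_1^{±1},…,X_N^{±1}]. -/
import Mathlib

set_option synthInstance.maxHeartbeats 1000000
set_option maxHeartbeats 1000000


/- STATEMENT 6: Conjugating the rational Dunkl operator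
D_1 = ∂_1 − ∑_{j≠1}(k/(X_1−X_j))(1 − s_{1j}) by |Δ|^{2k}·sign(Δ), i.e. applying
the automorphism ψ_{2k} sending ∂_1 ↦ ∂_1 + ∑_{j≠1} 2k/(X_1 − X_j) and
s_{1j} ↦ −s_{1j}, yields the operator ∂_1 + ∑_{j≠1}(k/(X_1−X_j))(1 − s_{1j}),
which preserves ℂ[X_1^{±1},…,X_N^{±1}]. -/

noncomputable section

open MvPolynomial

variable (N : ℕ)

abbrev RatField (N : ℕ) := FractionRing (MvPolynomial (Fin N) ℂ)

noncomputable def Xc {N : ℕ} (i : Fin N) : RatField N :=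
  algebraMap (MvPolynomial (Fin N) ℂ) (RatField N) (X i)

/-- the image ψ_{2k}(D_1) of the Dunkl operator under the automorphism
∂_1 ↦ ∂_1 + ∑_{j≠1} 2k/(X_1−X_j), s_{1j} ↦ −s_{1j} applied termwise to
D_1 = ∂_1 − ∑_{j≠1}(k/(X_1−X_j))(1 − s_{1j}) -/
noncomputable def psiD1 {N : ℕ} (k : ℂ) (i₁ : Fin N)
    (pd : RatField N →ₗ[ℂ] RatField N)
    (S : Fin N → (RatField N ≃ₐ[ℂ] RatField N)) (F : RatField N) : RatField N :=
  (pd F + ∑ j ∈ Finset.univ.erase i₁,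
      (algebraMap ℂ (RatField N) (2 * k)) * (Xc i₁ - Xc j)⁻¹ * F) -
    ∑ j ∈ Finset.univ.erase i₁,
      (algebraMap ℂ (RatField N) k) * (Xc i₁ - Xc j)⁻¹ * (F - (- (S j F)))

/-- the operator ∂_1 + ∑_{j≠1}(k/(X_1−X_j))(1−s_{1j}) -/
noncomputable def Dplus {N : ℕ} (k : ℂ) (i₁ : Fin N)
    (pd : RatField N →ₗ[ℂ] RatField N)
    (S : Fin N → (RatField N ≃ₐ[ℂ] RatField N)) (F : RatField N) : RatField N :=
  pd F + ∑ j ∈ Finset.univ.erase i₁,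
    (algebraMap ℂ (RatField N) k) * (Xc i₁ - Xc j)⁻¹ * (F - S j F)

/-- the Laurent polynomial subalgebra ℂ[X_1^{±1},…,X_N^{±1}] ⊂ K -/
noncomputable def LaurentSub (N : ℕ) : Subalgebra ℂ (RatField N) :=
  Algebra.adjoin ℂ (Set.range (Xc (N := N)) ∪ Set.range (fun i : Fin N => (Xc i)⁻¹))

namespace Stmt6Aux

variable {N : ℕ}

lemma Xc_mem (m : Fin N) : Xc m ∈ LaurentSub N :=
  Algebra.subset_adjoin (Or.inl ⟨m, rfl⟩)

lemma Xc_inv_mem (m : Fin N) : (Xc m)⁻¹ ∈ LaurentSub N :=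
  Algebra.subset_adjoin (Or.inr ⟨m, rfl⟩)

lemma Xc_injective : Function.Injective (Xc (N := N)) := fun a b h =>
  MvPolynomial.X_injective
    (IsFractionRing.injective (MvPolynomial (Fin N) ℂ) (RatField N) h)

lemma Xc_ne_zero (m : Fin N) : Xc m ≠ 0 := fun h0 =>
  MvPolynomial.X_ne_zero (R := ℂ) m
    (IsFractionRing.injective (MvPolynomial (Fin N) ℂ) (RatField N)
      (by rw [map_zero]; exact h0))

lemma d_ne_zero {i₁ j : Fin N} (h : j ≠ i₁) : Xc i₁ - Xc j ≠ 0 := by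
  rw [sub_ne_zero]
  exact fun hx => h (Xc_injective hx).symm

lemma pd_one (pd : RatField N →ₗ[ℂ] RatField N)
    (hLeib : ∀ a b : RatField N, pd (a * b) = a * pd b + pd a * b) :
    pd 1 = 0 := by
  have h := hLeib 1 1
  simp only [mul_one, one_mul] at h
  exact (left_eq_add.mp h)

lemma pd_mem (i₁ : Fin N) (pd : RatField N →ₗ[ℂ] RatField N)
    (hLeib : ∀ a b : RatField N, pd (a * b) = a * pd b + pd a * b)
    (hpdX : ∀ j : Fin N, pd (Xc j) = if j = i₁ then 1 else 0)
    {F : RatField N} (hF : F ∈ LaurentSub N) : pd F ∈ LaurentSub N := by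
  induction hF using Algebra.adjoin_induction with
  | mem x hx =>
    rcases hx with ⟨m, rfl⟩ | ⟨m, rfl⟩
    · rw [hpdX]
      split_ifs
      · exact one_mem _
      · exact zero_mem _
    · have h := hLeib (Xc m) (Xc m)⁻¹
      rw [mul_inv_cancel₀ (Xc_ne_zero m), pd_one pd hLeib] at h
      have h2 : Xc m * pd (Xc m)⁻¹ = -(pd (Xc m) * (Xc m)⁻¹) :=
        eq_neg_of_add_eq_zero_left h.symm
      have key : pd (Xc m)⁻¹ = (Xc m)⁻¹ * -(pd (Xc m) * (Xc m)⁻¹) := by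
        apply mul_left_cancel₀ (Xc_ne_zero m)
        rw [← mul_assoc, mul_inv_cancel₀ (Xc_ne_zero m), one_mul, h2]
      rw [key, hpdX]
      split_ifs
      · have e : (Xc m)⁻¹ * -(1 * (Xc m)⁻¹) = -((Xc m)⁻¹ * (Xc m)⁻¹) := by ring
        rw [e]
        exact neg_mem (mul_mem (Xc_inv_mem m) (Xc_inv_mem m))
      · have e : (Xc m)⁻¹ * -(0 * (Xc m)⁻¹) = 0 := by ring
        rw [e]
        exact zero_mem _
  | algebraMap r =>
    rw [Algebra.algebraMap_eq_smul_one, map_smul, pd_one pd hLeib]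
    exact SMulMemClass.smul_mem r (zero_mem _)
  | add x y hxm hym hx hy =>
    rw [map_add]; exact add_mem hx hy
  | mul x y hxm hym hx hy =>
    rw [hLeib]
    exact add_mem (mul_mem hxm hy) (mul_mem hx hym)

lemma S_mem (i₁ : Fin N) (S : Fin N → (RatField N ≃ₐ[ℂ] RatField N))
    (hS : ∀ j m : Fin N, S j (Xc m) = Xc (Equiv.swap i₁ j m)) (j : Fin N)
    {F : RatField N} (hF : F ∈ LaurentSub N) : S j F ∈ LaurentSub N := by
  induction hF using Algebra.adjoin_induction with
  | mem x hx =>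
    rcases hx with ⟨m, rfl⟩ | ⟨m, rfl⟩
    · rw [hS]; exact Xc_mem _
    · rw [map_inv₀, hS]; exact Xc_inv_mem _
  | algebraMap r => rw [AlgEquiv.commutes]; exact algebraMap_mem _ _
  | add x y hxm hym hx hy => rw [map_add]; exact add_mem hx hy
  | mul x y hxm hym hx hy => rw [map_mul]; exact mul_mem hx hy

lemma T_base (i₁ : Fin N) {j : Fin N} (hj : j ≠ i₁) (m : Fin N) :
    (Xc i₁ - Xc j)⁻¹ * (Xc m - Xc (Equiv.swap i₁ j m)) ∈ LaurentSub N := by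
  by_cases h1 : m = i₁
  · subst h1
    rw [Equiv.swap_apply_left, inv_mul_cancel₀ (d_ne_zero hj)]
    exact one_mem _
  · by_cases h2 : m = j
    · subst h2
      rw [Equiv.swap_apply_right]
      have e : (Xc i₁ - Xc m)⁻¹ * (Xc m - Xc i₁) =
          -((Xc i₁ - Xc m)⁻¹ * (Xc i₁ - Xc m)) := by ring
      rw [e, inv_mul_cancel₀ (d_ne_zero hj)]
      exact neg_mem (one_mem _)
    · rw [Equiv.swap_apply_of_ne_of_ne h1 h2, sub_self, mul_zero]
      exact zero_mem _

lemma T_mem (i₁ : Fin N) (S : Fin N → (RatField N ≃ₐ[ℂ] RatField N))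
    (hS : ∀ j m : Fin N, S j (Xc m) = Xc (Equiv.swap i₁ j m))
    {j : Fin N} (hj : j ≠ i₁)
    {F : RatField N} (hF : F ∈ LaurentSub N) :
    (Xc i₁ - Xc j)⁻¹ * (F - S j F) ∈ LaurentSub N := by
  induction hF using Algebra.adjoin_induction with
  | mem x hx =>
    rcases hx with ⟨m, rfl⟩ | ⟨m, rfl⟩
    · rw [hS]; exact T_base i₁ hj m
    · rw [map_inv₀, hS]
      have key : (Xc i₁ - Xc j)⁻¹ * ((Xc m)⁻¹ - (Xc (Equiv.swap i₁ j m))⁻¹) =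
          -((Xc i₁ - Xc j)⁻¹ * (Xc m - Xc (Equiv.swap i₁ j m))) *
            ((Xc m)⁻¹ * (Xc (Equiv.swap i₁ j m))⁻¹) := by
        have h1 := Xc_ne_zero m
        have h2 := Xc_ne_zero (Equiv.swap i₁ j m)
        rw [inv_sub_inv h1 h2]
        ring
      rw [key]
      exact mul_mem (neg_mem (T_base i₁ hj m))
        (mul_mem (Xc_inv_mem m) (Xc_inv_mem _))
  | algebraMap r =>
    rw [AlgEquiv.commutes, sub_self, mul_zero]
    exact zero_mem _
  | add x y hxm hym hx hy =>
    have : (Xc i₁ - Xc j)⁻¹ * (x + y - S j (x + y)) =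
        (Xc i₁ - Xc j)⁻¹ * (x - S j x) + (Xc i₁ - Xc j)⁻¹ * (y - S j y) := by
      rw [map_add]; ring
    rw [this]; exact add_mem hx hy
  | mul x y hxm hym hx hy =>
    have : (Xc i₁ - Xc j)⁻¹ * (x * y - S j (x * y)) =
        ((Xc i₁ - Xc j)⁻¹ * (x - S j x)) * y +
          S j x * ((Xc i₁ - Xc j)⁻¹ * (y - S j y)) := by
      rw [map_mul]; ring
    rw [this]
    exact add_mem (mul_mem hx hym) (mul_mem (S_mem i₁ S hS j hxm) hy)

end Stmt6Aux

theorem statement6 (k : ℂ) (i₁ : Fin N)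
    (pd : RatField N →ₗ[ℂ] RatField N)
    (hLeib : ∀ a b : RatField N, pd (a * b) = a * pd b + pd a * b)
    (hpdX : ∀ j : Fin N, pd (Xc j) = if j = i₁ then 1 else 0)
    (S : Fin N → (RatField N ≃ₐ[ℂ] RatField N))
    (hS : ∀ j m : Fin N, S j (Xc m) = Xc (Equiv.swap i₁ j m)) :
    (∀ F : RatField N, psiD1 k i₁ pd S F = Dplus k i₁ pd S F) ∧
    (∀ F ∈ LaurentSub N, Dplus k i₁ pd S F ∈ LaurentSub N) := by
  constructor
  · intro F
    unfold psiD1 Dplus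
    rw [add_sub_assoc, ← Finset.sum_sub_distrib]
    congr 1
    refine Finset.sum_congr rfl fun j hj => ?_
    rw [map_mul, map_ofNat]
    ring
  · intro F hF
    unfold Dplus
    refine add_mem (Stmt6Aux.pd_mem i₁ pd hLeib hpdX hF) (Subalgebra.sum_mem _ fun j hj => ?_)
    have hj' : j ≠ i₁ := (Finset.mem_erase.mp hj).1
    rw [mul_assoc]
    exact mul_mem (Subalgebra.algebraMap_mem _ _) (Stmt6Aux.T_mem i₁ S hS hj' hF)

end
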